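/- Let ξ ∈ (0,1) and m ≥ 0. Let ε_j > 0 with ε_j → 0, let u_j ∈ L²(ℝ) with u_j → u in L²(ℝ), and suppose ∫_0^1 ((u_j(x + ε_j ξ) − u_j(x))/ε_j)² dx ≤ m for all j. Then the restriction of u to (0,1) belongs to H¹((0,1)), i.e. it has a weak derivative u′ ∈ L²((0,1)), and ∫_0^1 (u′(x))² dx ≤ m / ξ². -/

import Mathlib

open MeasureTheory Filter Topology
open scoped ENNReal NNReal
open Function


lemma aux_lintegral_sq {α : Type*} [MeasurableSpace α] (μ : Measure α) (f : α → ℝ) :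
    ∫⁻ x, ENNReal.ofReal (f x ^ 2) ∂μ = eLpNorm f 2 μ ^ 2 := by
  rw [eLpNorm_eq_lintegral_rpow_enorm_toReal (by norm_num) (by norm_num)]
  rw [← ENNReal.rpow_natCast _ 2, ← ENNReal.rpow_mul]
  norm_num
  refine lintegral_congr fun x => ?_
  rw [Real.enorm_eq_ofReal_abs, ← ENNReal.ofReal_pow (abs_nonneg _), sq_abs]

lemma aux_eLpNorm_le_of_lintegral {α : Type*} [MeasurableSpace α] {μ : Measure α} {f : α → ℝ}
    {m : ℝ} (hm : 0 ≤ m) (h : ∫⁻ x, ENNReal.ofReal (f x ^ 2) ∂μ ≤ ENNReal.ofReal m) :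
    eLpNorm f 2 μ ≤ ENNReal.ofReal (Real.sqrt m) := by
  rw [aux_lintegral_sq] at h
  have h2 : ENNReal.ofReal m = ENNReal.ofReal (Real.sqrt m) ^ 2 := by
    rw [← ENNReal.ofReal_pow (Real.sqrt_nonneg _), Real.sq_sqrt hm]
  rw [h2] at h
  by_contra hc
  push_neg at hc
  exact absurd h (not_le.mpr (ENNReal.pow_lt_pow_left (by norm_num) hc))

lemma aux_integrable_mul {α : Type*} [MeasurableSpace α] {μ : Measure α} {f g : α → ℝ}
    (hf : MemLp f 2 μ) (hg : MemLp g 2 μ) : Integrable (fun x => f x * g x) μ := by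
  have h := MeasureTheory.L2.integrable_inner (𝕜 := ℝ) (hf.toLp f) (hg.toLp g)
  refine h.congr ?_
  filter_upwards [hf.coeFn_toLp, hg.coeFn_toLp] with x h1 h2
  simp [RCLike.inner_apply, h1, h2, mul_comm]

lemma aux_cauchy_schwarz {α : Type*} [MeasurableSpace α] {μ : Measure α} {f g : α → ℝ}
    (hf : MemLp f 2 μ) (hg : MemLp g 2 μ) :
    |∫ x, f x * g x ∂μ| ≤ (eLpNorm f 2 μ).toReal * (eLpNorm g 2 μ).toReal := by
  have h1 : @inner ℝ _ _ (hf.toLp f) (hg.toLp g) = ∫ x, f x * g x ∂μ := by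
    rw [MeasureTheory.L2.inner_def]
    refine integral_congr_ae ?_
    filter_upwards [hf.coeFn_toLp, hg.coeFn_toLp] with x h1 h2
    simp [RCLike.inner_apply, h1, h2, mul_comm]
  calc |∫ x, f x * g x ∂μ| = |@inner ℝ _ _ (hf.toLp f) (hg.toLp g)| := by rw [h1]
    _ ≤ ‖hf.toLp f‖ * ‖hg.toLp g‖ := abs_real_inner_le_norm _ _
    _ = _ := by rw [MeasureTheory.Lp.norm_toLp, MeasureTheory.Lp.norm_toLp]

lemma aux_shift_mul (f g : ℝ → ℝ) (c : ℝ) :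
    ∫ x, f (x + c) * g x = ∫ x, f x * g (x - c) := by
  have := MeasureTheory.integral_add_right_eq_self (μ := volume)
    (fun y => f y * g (y - c)) c
  simpa using this


lemma aux_psi (φ : ℝ → ℝ) (hφ : ContDiff ℝ (⊤ : ℕ∞) φ) (hφc : HasCompactSupport φ)
    (hφs : tsupport φ ⊆ Set.Ioo 0 1) {δ : ℝ} (hδ : 0 < δ) :
    ∃ η > 0, ∀ c : ℝ, 0 < c → c ≤ 1 → c < η →
      eLpNorm (fun x => (φ (x - c) - φ x) / c + deriv φ x) 2 (volume : Measure ℝ)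
        ≤ ENNReal.ofReal (2 * δ) := by
  have hd : Differentiable ℝ φ := hφ.differentiable (by simp)
  have hdc : Continuous (deriv φ) := hφ.continuous_deriv (by simp)
  have uc : UniformContinuous (deriv φ) :=
    (hφc.deriv).uniformContinuous_of_continuous hdc
  obtain ⟨η, hη, hηimp⟩ := Metric.uniformContinuous_iff.mp uc δ hδ
  refine ⟨η, hη, fun c hc0 hc1 hcη => ?_⟩
  set g : ℝ → ℝ := fun x => (φ (x - c) - φ x) / c + deriv φ x with hg
  have hgb : ∀ x, |g x| ≤ δ := by
    intro x
    obtain ⟨θ, hθ, hslope⟩ := exists_hasDerivAt_eq_slope φ (deriv φ)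
      (show x - c < x by linarith) (hd.continuous.continuousOn)
      (fun t _ => (hd t).hasDerivAt)
    have hxc : x - (x - c) = c := by ring
    rw [hxc] at hslope
    have hgx : g x = deriv φ x - deriv φ θ := by
      rw [hg]
      simp only
      rw [hslope]
      field_simp
      ring
    have hdist : dist x θ < η := by
      rw [Real.dist_eq]
      have h1 := hθ.1; have h2 := hθ.2
      rw [abs_lt]; constructor <;> linarith
    have := hηimp hdist
    rw [Real.dist_eq] at this
    rw [hgx]
    exact le_of_lt this
  have hsupp : support g ⊆ Set.Icc (-1 : ℝ) 2 := by
    intro x hx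
    by_contra hmem
    simp only [Set.mem_Icc, not_and_or, not_le] at hmem
    have hout : ∀ y : ℝ, y < 0 ∨ 1 < y → φ y = 0 := by
      intro y hy
      refine image_eq_zero_of_notMem_tsupport (fun hmem' => ?_)
      have := hφs hmem'
      rcases hy with h | h
      · exact absurd this.1 (by linarith)
      · exact absurd this.2 (by linarith)
    have hφx : φ x = 0 := by
      refine hout x ?_
      rcases hmem with h | h
      · left; linarith
      · right; linarith
    have hφxc : φ (x - c) = 0 := by
      refine hout (x - c) ?_
      rcases hmem with h | h
      · left; linarith
      · right; linarith
    have hdx : deriv φ x = 0 := by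
      by_contra hne
      have : x ∈ tsupport φ := support_deriv_subset (by simpa using hne)
      have := hφs this
      rcases hmem with h | h
      · exact absurd this.1 (by linarith)
      · exact absurd this.2 (by linarith)
    apply hx
    simp [hg, hφx, hφxc, hdx]
  have h1 : eLpNorm g 2 (volume : Measure ℝ)
      = eLpNorm g 2 ((volume : Measure ℝ).restrict (Set.Icc (-1 : ℝ) 2)) :=
    (eLpNorm_restrict_eq_of_support_subset hsupp).symm
  have h2 : eLpNorm g 2 ((volume : Measure ℝ).restrict (Set.Icc (-1 : ℝ) 2))
      ≤ ((volume : Measure ℝ).restrict (Set.Icc (-1 : ℝ) 2)) Set.univ ^ ((2:ℝ≥0∞).toReal)⁻¹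
        * ENNReal.ofReal δ := by
    refine eLpNorm_le_of_ae_bound (ae_of_all _ fun x => ?_)
    rw [Real.norm_eq_abs]; exact hgb x
  have h3 : ((volume : Measure ℝ).restrict (Set.Icc (-1 : ℝ) 2)) Set.univ ^ ((2:ℝ≥0∞).toReal)⁻¹
      ≤ 2 := by
    rw [Measure.restrict_apply_univ, Real.volume_Icc]
    have : ENNReal.ofReal (2 - (-1)) ≤ (2 : ℝ≥0∞) ^ (2 : ℝ) := by
      rw [show ((2:ℝ≥0∞) ^ (2:ℝ)) = ((2:ℝ≥0∞) ^ (2:ℕ)) from by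
        rw [← ENNReal.rpow_natCast]; norm_num]
      calc ENNReal.ofReal (2 - (-1)) ≤ ENNReal.ofReal 4 :=
            ENNReal.ofReal_le_ofReal (by norm_num)
        _ = (2:ℝ≥0∞) ^ (2:ℕ) := by simp; norm_num
    calc ENNReal.ofReal (2 - (-1)) ^ ((2:ℝ≥0∞).toReal)⁻¹
        ≤ ((2 : ℝ≥0∞) ^ (2:ℝ)) ^ ((2:ℝ≥0∞).toReal)⁻¹ := by
          exact ENNReal.rpow_le_rpow this (by norm_num)
      _ = 2 := by
          rw [← ENNReal.rpow_mul]
          norm_num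
  calc eLpNorm g 2 (volume : Measure ℝ)
      ≤ (((volume : Measure ℝ).restrict (Set.Icc (-1 : ℝ) 2)) Set.univ ^ ((2:ℝ≥0∞).toReal)⁻¹)
        * ENNReal.ofReal δ := by rw [h1]; exact h2
    _ ≤ 2 * ENNReal.ofReal δ := mul_le_mul_left h3 _
    _ = ENNReal.ofReal (2 * δ) := by
        rw [ENNReal.ofReal_mul (by norm_num)]; norm_num


lemma aux_key_tendsto (ξ : ℝ) (hξ0 : 0 < ξ) (hξ1 : ξ < 1)
    (ε : ℕ → ℝ) (hε : ∀ j, 0 < ε j) (hεlim : Tendsto ε atTop (𝓝 0))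
    (uj : ℕ → ℝ → ℝ) (u : ℝ → ℝ)
    (huj : ∀ j, MemLp (uj j) 2 (volume : Measure ℝ))
    (hu : MemLp u 2 (volume : Measure ℝ))
    (hconv : Tendsto (fun j => eLpNorm (fun x => uj j x - u x) 2 (volume : Measure ℝ))
      atTop (𝓝 0))
    (φ : ℝ → ℝ) (hφ : ContDiff ℝ (⊤ : ℕ∞) φ) (hφc : HasCompactSupport φ)
    (hφs : tsupport φ ⊆ Set.Ioo 0 1) :
    Tendsto (fun j => ∫ x, (uj j (x + ε j * ξ) - uj j x) / ε j * φ x) atTop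
      (𝓝 (-ξ * ∫ x, u x * deriv φ x)) := by
  have hφcont : Continuous φ := hφ.continuous
  have hφmem : MemLp φ 2 (volume : Measure ℝ) :=
    hφcont.memLp_of_hasCompactSupport hφc
  have hdcont : Continuous (deriv φ) := hφ.continuous_deriv (by simp)
  have hdcs : HasCompactSupport (deriv φ) := hφc.deriv
  have hdmem : MemLp (deriv φ) 2 (volume : Measure ℝ) :=
    hdcont.memLp_of_hasCompactSupport hdcs
  set c : ℕ → ℝ := fun j => ε j * ξ with hc
  have hc0 : ∀ j, 0 < c j := fun j => mul_pos (hε j) hξ0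
  have hclim : Tendsto c atTop (𝓝 0) := by
    simpa using hεlim.mul_const ξ
  -- translated φ
  have hφshift_cont : ∀ j, Continuous (fun x => φ (x - c j)) :=
    fun j => hφcont.comp (continuous_sub_right _)
  have hφshift_cs : ∀ j, HasCompactSupport (fun x => φ (x - c j)) := by
    intro j
    exact hφc.comp_homeomorph (Homeomorph.subRight (c j))
  have hφshift_mem : ∀ j, MemLp (fun x => φ (x - c j)) 2 (volume : Measure ℝ) :=
    fun j => (hφshift_cont j).memLp_of_hasCompactSupport (hφshift_cs j)
  -- ψ
  set ψ : ℕ → ℝ → ℝ := fun j x => (φ (x - c j) - φ x) / ε j with hψ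
  have hψcont : ∀ j, Continuous (ψ j) :=
    fun j => ((hφshift_cont j).sub hφcont).div_const _
  have hψcs : ∀ j, HasCompactSupport (ψ j) := by
    intro j
    have h0 : HasCompactSupport (fun x => φ (x - c j) - φ x) :=
      (hφshift_cs j).comp₂_left hφc (sub_zero 0)
    have : (fun x => (φ (x - c j) - φ x) / ε j)
        = fun x => (ε j)⁻¹ • (φ (x - c j) - φ x) := by
      funext x; simp [div_eq_inv_mul, smul_eq_mul]
    show HasCompactSupport (fun x => (φ (x - c j) - φ x) / ε j)
    exact h0.comp_left (g := fun y => y / ε j) (by simp)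

  have hψmem : ∀ j, MemLp (ψ j) 2 (volume : Measure ℝ) :=
    fun j => (hψcont j).memLp_of_hasCompactSupport (hψcs j)
  -- χ
  set χ : ℕ → ℝ → ℝ := fun j x => ψ j x + ξ * deriv φ x with hχ
  have hχmem : ∀ j, MemLp (χ j) 2 (volume : Measure ℝ) :=
    fun j => (hψmem j).add (hdmem.const_mul ξ)
  -- uj shifted
  have hujshift : ∀ j, MemLp (fun x => uj j (x + c j)) 2 (volume : Measure ℝ) := by
    intro j
    have := (huj j).comp_measurePreserving
      (measurePreserving_add_right (volume : Measure ℝ) (c j))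
    exact this
  -- Step 1: exact identity
  have step1 : ∀ j, ∫ x, (uj j (x + ε j * ξ) - uj j x) / ε j * φ x
      = ∫ x, uj j x * ψ j x := by
    intro j
    have hI1 : Integrable (fun x => uj j (x + c j) * φ x) :=
      aux_integrable_mul (hujshift j) hφmem
    have hI2 : Integrable (fun x => uj j x * φ x) :=
      aux_integrable_mul (huj j) hφmem
    have hI3 : Integrable (fun x => uj j x * φ (x - c j)) :=
      aux_integrable_mul (huj j) (hφshift_mem j)
    have lhs_eq : ∫ x, (uj j (x + ε j * ξ) - uj j x) / ε j * φ x
        = ((ε j)⁻¹ * ∫ x, uj j (x + c j) * φ x) - (ε j)⁻¹ * ∫ x, uj j x * φ x := by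
      have hεne : ε j ≠ 0 := (hε j).ne'
      have heq : (fun x => (uj j (x + ε j * ξ) - uj j x) / ε j * φ x)
          = fun x => (ε j)⁻¹ * (uj j (x + c j) * φ x) - (ε j)⁻¹ * (uj j x * φ x) := by
        funext x
        show (uj j (x + ε j * ξ) - uj j x) / ε j * φ x
          = (ε j)⁻¹ * (uj j (x + ε j * ξ) * φ x) - (ε j)⁻¹ * (uj j x * φ x)
        field_simp
      rw [heq, integral_sub (hI1.const_mul _) (hI2.const_mul _),
        integral_const_mul, integral_const_mul]
    have rhs_eq : ∫ x, uj j x * ψ j x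
        = ((ε j)⁻¹ * ∫ x, uj j x * φ (x - c j)) - (ε j)⁻¹ * ∫ x, uj j x * φ x := by
      have hεne : ε j ≠ 0 := (hε j).ne'
      have heq : (fun x => uj j x * ψ j x)
          = fun x => (ε j)⁻¹ * (uj j x * φ (x - c j)) - (ε j)⁻¹ * (uj j x * φ x) := by
        funext x
        show uj j x * ((φ (x - c j) - φ x) / ε j)
          = (ε j)⁻¹ * (uj j x * φ (x - c j)) - (ε j)⁻¹ * (uj j x * φ x)
        field_simp
      rw [heq, integral_sub (hI3.const_mul _) (hI2.const_mul _),
        integral_const_mul, integral_const_mul]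
    rw [lhs_eq, rhs_eq, aux_shift_mul (uj j) φ (c j)]
  -- limit value as integral
  have hLrw : -ξ * ∫ x, u x * deriv φ x = ∫ x, u x * (-ξ * deriv φ x) := by
    rw [show (fun x => u x * (-ξ * deriv φ x)) = fun x => -ξ * (u x * deriv φ x) from
      funext fun x => by ring, integral_const_mul]
  -- Step 3: splitting
  have split : ∀ j, ∫ x, uj j x * ψ j x
      = (∫ x, (uj j x - u x) * ψ j x) + (∫ x, u x * χ j x)
        + ∫ x, u x * (-ξ * deriv φ x) := by
    intro j
    have hd1 : MemLp (fun x => uj j x - u x) 2 (volume : Measure ℝ) := (huj j).sub hu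
    have hI1 : Integrable (fun x => (uj j x - u x) * ψ j x) :=
      aux_integrable_mul hd1 (hψmem j)
    have hI2 : Integrable (fun x => u x * χ j x) := aux_integrable_mul hu (hχmem j)
    have hI3 : Integrable (fun x => u x * (-ξ * deriv φ x)) :=
      aux_integrable_mul hu (hdmem.const_mul (-ξ))
    rw [show (fun x => uj j x * ψ j x)
        = fun x => ((uj j x - u x) * ψ j x + u x * χ j x) + u x * (-ξ * deriv φ x) from
      funext fun x => by simp only [hχ]; ring,
      integral_add ((show Integrable (fun x => (uj j x - u x) * ψ j x + u x * χ j x) volume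
        from hI1.add hI2)) hI3, integral_add hI1 hI2]
  -- abbreviations
  have hd1 : ∀ j, MemLp (fun x => uj j x - u x) 2 (volume : Measure ℝ) :=
    fun j => (huj j).sub hu
  set A : ℕ → ℝ :=
    fun j => (eLpNorm (fun x => uj j x - u x) 2 (volume : Measure ℝ)).toReal with hA_def
  set B : ℕ → ℝ := fun j => (eLpNorm (χ j) 2 (volume : Measure ℝ)).toReal with hB_def
  set Cφ : ℝ := (eLpNorm (fun x => ξ * deriv φ x) 2 (volume : Measure ℝ)).toReal with hC_def
  set Uc : ℝ := (eLpNorm u 2 (volume : Measure ℝ)).toReal with hU_def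
  have hAlim : Tendsto A atTop (𝓝 0) := by
    have h := (ENNReal.tendsto_toReal (by simp)).comp hconv
    exact h
  have hBnn : ∀ j, 0 ≤ B j := fun j => ENNReal.toReal_nonneg
  have hBlim : Tendsto B atTop (𝓝 0) := by
    rw [NormedAddCommGroup.tendsto_nhds_zero]
    intro δ hδ
    obtain ⟨η, hη, himp⟩ := aux_psi φ hφ hφc hφs (show (0:ℝ) < δ/8 by linarith)
    have hev : ∀ᶠ j in atTop, c j < min η 1 :=
      (tendsto_order.1 hclim).2 _ (lt_min hη one_pos)
    filter_upwards [hev] with j hj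
    have hc1 : c j ≤ 1 := le_of_lt (lt_of_lt_of_le hj (min_le_right _ _))
    have hcη : c j < η := lt_of_lt_of_le hj (min_le_left _ _)
    have hgj := himp (c j) (hc0 j) hc1 hcη
    have hχeq : χ j = ξ • (fun x => (φ (x - c j) - φ x) / c j + deriv φ x) := by
      funext x
      have hεne : ε j ≠ 0 := (hε j).ne'
      have hξne : ξ ≠ 0 := hξ0.ne'
      show (φ (x - c j) - φ x) / ε j + ξ * deriv φ x
        = ξ * ((φ (x - c j) - φ x) / (ε j * ξ) + deriv φ x)
      field_simp
    have hnorm : eLpNorm (χ j) 2 (volume : Measure ℝ) ≤ ENNReal.ofReal (δ/4) := by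
      rw [hχeq, eLpNorm_const_smul]
      calc (‖ξ‖₊ : ℝ≥0∞) * eLpNorm (fun x => (φ (x - c j) - φ x) / c j + deriv φ x) 2
            (volume : Measure ℝ)
          ≤ 1 * ENNReal.ofReal (2 * (δ/8)) := by
            refine mul_le_mul' ?_ hgj
            have h1 : ‖ξ‖₊ ≤ (1:ℝ≥0) := by
              rw [← NNReal.coe_le_coe]
              simp only [coe_nnnorm, Real.norm_eq_abs, NNReal.coe_one]
              rw [abs_of_pos hξ0]
              linarith
            exact_mod_cast h1
        _ = ENNReal.ofReal (δ/4) := by rw [one_mul]; congr 1; ring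
    have hBj : B j ≤ δ/4 := by
      rw [hB_def]
      calc (eLpNorm (χ j) 2 (volume : Measure ℝ)).toReal
          ≤ (ENNReal.ofReal (δ/4)).toReal := ENNReal.toReal_mono ENNReal.ofReal_ne_top hnorm
        _ = δ/4 := ENNReal.toReal_ofReal (by linarith)
    rw [Real.norm_eq_abs, abs_of_nonneg (hBnn j)]
    linarith
  have hSle : ∀ j, (eLpNorm (ψ j) 2 (volume : Measure ℝ)).toReal ≤ B j + Cφ := by
    intro j
    have h1 : eLpNorm (ψ j) 2 (volume : Measure ℝ)
        ≤ eLpNorm (χ j) 2 (volume : Measure ℝ)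
          + eLpNorm (fun x => ξ * deriv φ x) 2 (volume : Measure ℝ) := by
      have heq : ψ j = fun x => χ j x - ξ * deriv φ x := funext fun x => by
        simp only [hχ]; ring
      rw [heq]
      exact eLpNorm_sub_le ((hχmem j).1) ((hdmem.const_mul ξ).1) one_le_two
    exact ENNReal.toReal_le_add h1 (hχmem j).2.ne ((hdmem.const_mul ξ).2.ne)
  have key : ∀ j, ‖(∫ x, (uj j (x + ε j * ξ) - uj j x) / ε j * φ x)
      - (-ξ * ∫ x, u x * deriv φ x)‖ ≤ A j * (B j + Cφ) + Uc * B j := by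
    intro j
    rw [step1 j, hLrw, split j]
    have hre : ((∫ x, (uj j x - u x) * ψ j x) + (∫ x, u x * χ j x)
          + ∫ x, u x * (-ξ * deriv φ x)) - ∫ x, u x * (-ξ * deriv φ x)
        = (∫ x, (uj j x - u x) * ψ j x) + ∫ x, u x * χ j x := by ring
    rw [hre, Real.norm_eq_abs]
    calc |(∫ x, (uj j x - u x) * ψ j x) + ∫ x, u x * χ j x|
        ≤ |∫ x, (uj j x - u x) * ψ j x| + |∫ x, u x * χ j x| := abs_add_le _ _
      _ ≤ A j * (eLpNorm (ψ j) 2 (volume : Measure ℝ)).toReal + Uc * B j := by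
          gcongr
          · exact aux_cauchy_schwarz (hd1 j) (hψmem j)
          · exact aux_cauchy_schwarz hu (hχmem j)
      _ ≤ A j * (B j + Cφ) + Uc * B j :=
          add_le_add_left
            (mul_le_mul_of_nonneg_left (hSle j) ENNReal.toReal_nonneg) _
  have hR : Tendsto (fun j => A j * (B j + Cφ) + Uc * B j) atTop (𝓝 0) := by
    have h := (hAlim.mul (hBlim.add (tendsto_const_nhds (x := Cφ)))).add
      ((tendsto_const_nhds (x := Uc)).mul hBlim)
    simpa using h
  rw [tendsto_iff_norm_sub_tendsto_zero]
  exact squeeze_zero (fun j => norm_nonneg _) key hR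

/-- One-dimensional slicing lemma: if `ξ ∈ (0,1)`, `ε_j → 0`,
`u_j → u` in `L²(ℝ)` and the difference-quotient energies
`∫_0^1 ((u_j(x+ε_jξ) − u_j(x))/ε_j)² dx` are bounded by `m`, then `u` restricted to
`(0,1)` is in `H¹((0,1))`, with weak derivative `u′` satisfying `∫_0^1 u′² ≤ m/ξ²`. -/
theorem stmt_15 (ξ : ℝ) (hξ : ξ ∈ Set.Ioo (0 : ℝ) 1) (m : ℝ) (hm : 0 ≤ m)
    (ε : ℕ → ℝ) (hε : ∀ j, 0 < ε j) (hεlim : Tendsto ε atTop (𝓝 0))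
    (uj : ℕ → ℝ → ℝ) (u : ℝ → ℝ)
    (huj : ∀ j, MemLp (uj j) 2 (volume : Measure ℝ))
    (hu : MemLp u 2 (volume : Measure ℝ))
    (hconv : Tendsto (fun j => eLpNorm (fun x => uj j x - u x) 2 (volume : Measure ℝ))
      atTop (𝓝 0))
    (hbound : ∀ j,
      (∫⁻ x in Set.Ioo (0 : ℝ) 1,
          ENNReal.ofReal (((uj j (x + ε j * ξ) - uj j x) / ε j) ^ 2)) ≤
        ENNReal.ofReal m) :
    ∃ u' : ℝ → ℝ, MemLp u' 2 (volume.restrict (Set.Ioo (0 : ℝ) 1)) ∧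
      (∀ φ : ℝ → ℝ, ContDiff ℝ (⊤ : ℕ∞) φ → HasCompactSupport φ →
        tsupport φ ⊆ Set.Ioo (0 : ℝ) 1 →
        (∫ x in Set.Ioo (0 : ℝ) 1, u x * deriv φ x) =
          - ∫ x in Set.Ioo (0 : ℝ) 1, u' x * φ x) ∧
      (∫⁻ x in Set.Ioo (0 : ℝ) 1, ENNReal.ofReal ((u' x) ^ 2)) ≤
        ENNReal.ofReal (m / ξ ^ 2) := by
  obtain ⟨hξ0, hξ1⟩ := hξ
  haveI : Fact ((1:ℝ≥0∞) ≤ 2) := ⟨one_le_two⟩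
  set μI : Measure ℝ := volume.restrict (Set.Ioo (0 : ℝ) 1) with hμI
  set D : ℕ → ℝ → ℝ := fun j x => (uj j (x + ε j * ξ) - uj j x) / ε j with hD
  have hDmeas : ∀ j, AEStronglyMeasurable (D j) μI := by
    intro j
    have h1 : AEStronglyMeasurable (uj j) volume := (huj j).1
    have h2 : AEStronglyMeasurable (fun x => uj j (x + ε j * ξ)) volume := by
      have := h1.comp_measurePreserving
        (measurePreserving_add_right (volume : Measure ℝ) (ε j * ξ))
      exact this
    exact ((h2.sub h1).mul aestronglyMeasurable_const).restrict.congr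
      (ae_of_all _ fun x => (div_eq_mul_inv _ _).symm)
  have hDnorm : ∀ j, eLpNorm (D j) 2 μI ≤ ENNReal.ofReal (Real.sqrt m) :=
    fun j => aux_eLpNorm_le_of_lintegral hm (hbound j)
  have hDmem : ∀ j, MemLp (D j) 2 μI :=
    fun j => ⟨hDmeas j, lt_of_le_of_lt (hDnorm j) ENNReal.ofReal_lt_top⟩
  set v : ℕ → Lp ℝ 2 μI := fun j => (hDmem j).toLp (D j) with hv
  have hvnorm : ∀ j, ‖v j‖ ≤ Real.sqrt m := by
    intro j
    rw [hv]
    rw [MeasureTheory.Lp.norm_toLp]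
    calc (eLpNorm (D j) 2 μI).toReal
        ≤ (ENNReal.ofReal (Real.sqrt m)).toReal :=
          ENNReal.toReal_mono ENNReal.ofReal_ne_top (hDnorm j)
      _ = Real.sqrt m := ENNReal.toReal_ofReal (Real.sqrt_nonneg m)
  -- ultrafilter limit functional
  set U : Ultrafilter ℕ := Ultrafilter.of atTop with hUdef
  have hU : (U : Filter ℕ) ≤ atTop := Ultrafilter.of_le _
  have hinner_bd : ∀ (f : Lp ℝ 2 μI) (j : ℕ),
      |(inner ℝ (v j) f : ℝ)| ≤ Real.sqrt m * ‖f‖ := by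
    intro f j
    calc |(inner ℝ (v j) f : ℝ)| ≤ ‖v j‖ * ‖f‖ := abs_real_inner_le_norm _ _
      _ ≤ Real.sqrt m * ‖f‖ := mul_le_mul_of_nonneg_right (hvnorm j) (norm_nonneg f)
  have hlimex : ∀ f : Lp ℝ 2 μI,
      ∃ L, Tendsto (fun j => (inner ℝ (v j) f : ℝ)) (U : Filter ℕ) (𝓝 L) := by
    intro f
    obtain ⟨L, _, hle⟩ :=
      (isCompact_Icc (a := -(Real.sqrt m * ‖f‖)) (b := Real.sqrt m * ‖f‖)).ultrafilter_le_nhds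
        (U.map fun j => (inner ℝ (v j) f : ℝ)) (by
          rw [Ultrafilter.coe_map, le_principal_iff, Filter.mem_map]
          refine Filter.univ_mem' fun j => ?_
          have h := hinner_bd f j
          rw [Set.mem_preimage, Set.mem_Icc]
          constructor
          · linarith [neg_abs_le (inner ℝ (v j) f : ℝ)]
          · linarith [le_abs_self (inner ℝ (v j) f : ℝ)])
    refine ⟨L, ?_⟩
    rwa [Ultrafilter.coe_map] at hle
  set T0 : Lp ℝ 2 μI → ℝ :=
    fun f => limUnder (U : Filter ℕ) (fun j => (inner ℝ (v j) f : ℝ)) with hT0def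
  have hT0 : ∀ f, Tendsto (fun j => (inner ℝ (v j) f : ℝ)) (U : Filter ℕ) (𝓝 (T0 f)) :=
    fun f => tendsto_nhds_limUnder (hlimex f)
  have hT0add : ∀ f g, T0 (f + g) = T0 f + T0 g := by
    intro f g
    refine tendsto_nhds_unique (hT0 (f + g)) ?_
    exact ((hT0 f).add (hT0 g)).congr fun j => (inner_add_right _ _ _).symm
  have hT0smul : ∀ (r : ℝ) (f), T0 (r • f) = r * T0 f := by
    intro r f
    refine tendsto_nhds_unique (hT0 (r • f)) ?_
    exact ((hT0 f).const_mul r).congr fun j => (real_inner_smul_right _ _ r).symm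
  have hT0bd : ∀ f, ‖T0 f‖ ≤ Real.sqrt m * ‖f‖ := by
    intro f
    rw [Real.norm_eq_abs]
    have habs : Tendsto (fun j => |(inner ℝ (v j) f : ℝ)|) (U : Filter ℕ) (𝓝 |T0 f|) :=
      (hT0 f).abs
    exact le_of_tendsto habs (Filter.Eventually.of_forall fun j => hinner_bd f j)
  set Tlin : Lp ℝ 2 μI →ₗ[ℝ] ℝ :=
    { toFun := T0, map_add' := hT0add,
      map_smul' := fun r f => by simpa using hT0smul r f } with hTlin
  set T : Lp ℝ 2 μI →L[ℝ] ℝ := LinearMap.mkContinuous Tlin (Real.sqrt m) hT0bd with hT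
  set w : Lp ℝ 2 μI := (InnerProductSpace.toDual ℝ (Lp ℝ 2 μI)).symm T with hw
  have hwip : ∀ f : Lp ℝ 2 μI, (inner ℝ w f : ℝ) = T0 f := by
    intro f
    rw [hw]
    exact InnerProductSpace.toDual_symm_apply
  have hwnorm : ‖w‖ ≤ Real.sqrt m := by
    rw [hw, LinearIsometryEquiv.norm_map]
    exact LinearMap.mkContinuous_norm_le _ (Real.sqrt_nonneg m) _
  refine ⟨fun x => ξ⁻¹ * (w : ℝ → ℝ) x, (MeasureTheory.Lp.memLp w).const_mul ξ⁻¹, ?_, ?_⟩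
  · -- weak derivative identity
    intro φ hφ hφc hφs
    have hφcont : Continuous φ := hφ.continuous
    have hφmemI : MemLp φ 2 μI := (hφcont.memLp_of_hasCompactSupport hφc).restrict _
    set fφ : Lp ℝ 2 μI := hφmemI.toLp φ with hfφ
    have hinner_eq : ∀ j, (inner ℝ (v j) fφ : ℝ) = ∫ x, D j x * φ x ∂μI := by
      intro j
      rw [MeasureTheory.L2.inner_def]
      refine integral_congr_ae ?_
      filter_upwards [(hDmem j).coeFn_toLp, hφmemI.coeFn_toLp] with x h1 h2
      simp [hv, hfφ, RCLike.inner_apply, h1, h2, mul_comm]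
    have hDfull : ∀ j, (∫ x, D j x * φ x ∂μI) = ∫ x, D j x * φ x := by
      intro j
      exact setIntegral_eq_integral_of_forall_compl_eq_zero fun x hx => by
        rw [image_eq_zero_of_notMem_tsupport (fun hmem => hx (hφs hmem)), mul_zero]
    have hderiv_full : (∫ x, u x * deriv φ x ∂μI) = ∫ x, u x * deriv φ x := by
      exact setIntegral_eq_integral_of_forall_compl_eq_zero fun x hx => by
        have : deriv φ x = 0 := by
          by_contra hne
          exact hx (hφs (support_deriv_subset (by simpa using hne)))
        rw [this, mul_zero]
    have hkey : Tendsto (fun j => (inner ℝ (v j) fφ : ℝ)) atTop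
        (𝓝 (-ξ * ∫ x, u x * deriv φ x ∂μI)) := by
      rw [hderiv_full]
      have h := aux_key_tendsto ξ hξ0 hξ1 ε hε hεlim uj u huj hu hconv φ hφ hφc hφs
      refine h.congr fun j => ?_
      rw [hinner_eq j, hDfull j]
    have hT0fφ : T0 fφ = -ξ * ∫ x, u x * deriv φ x ∂μI :=
      tendsto_nhds_unique (hT0 fφ) (hkey.mono_left hU)
    have hwfφ : (inner ℝ w fφ : ℝ) = ∫ x, (w : ℝ → ℝ) x * φ x ∂μI := by
      rw [MeasureTheory.L2.inner_def]
      refine integral_congr_ae ?_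
      filter_upwards [hφmemI.coeFn_toLp] with x h2
      simp [hfφ, RCLike.inner_apply, h2, mul_comm]
    have hcomb : (∫ x, (w : ℝ → ℝ) x * φ x ∂μI) = -ξ * ∫ x, u x * deriv φ x ∂μI := by
      rw [← hwfφ, hwip, hT0fφ]
    have hmul : (∫ x, ξ⁻¹ * ((w : ℝ → ℝ) x * φ x) ∂μI)
        = ξ⁻¹ * ∫ x, (w : ℝ → ℝ) x * φ x ∂μI := integral_const_mul _ _
    have hξne : ξ ≠ 0 := hξ0.ne'
    calc ∫ x in Set.Ioo (0:ℝ) 1, u x * deriv φ x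
        = ∫ x, u x * deriv φ x ∂μI := rfl
      _ = - ∫ x in Set.Ioo (0:ℝ) 1, ξ⁻¹ * (w : ℝ → ℝ) x * φ x := by
          have : (∫ x, ξ⁻¹ * (w : ℝ → ℝ) x * φ x ∂μI)
              = ξ⁻¹ * ∫ x, (w : ℝ → ℝ) x * φ x ∂μI := by
            rw [← hmul]
            refine integral_congr_ae (ae_of_all _ fun x => by ring)
          show (∫ x, u x * deriv φ x ∂μI) = - ∫ x, ξ⁻¹ * (w : ℝ → ℝ) x * φ x ∂μI
          rw [this, hcomb]
          field_simp
  · -- norm bound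
    have h1 : (∫⁻ x in Set.Ioo (0:ℝ) 1, ENNReal.ofReal ((ξ⁻¹ * (w : ℝ → ℝ) x) ^ 2))
        = eLpNorm (fun x => ξ⁻¹ * (w : ℝ → ℝ) x) 2 μI ^ 2 :=
      aux_lintegral_sq μI _
    rw [h1]
    have h2 : eLpNorm (fun x => ξ⁻¹ * (w : ℝ → ℝ) x) 2 μI
        = (‖ξ⁻¹‖₊ : ℝ≥0∞) * eLpNorm (w : ℝ → ℝ) 2 μI := by
      rw [show (fun x => ξ⁻¹ * (w : ℝ → ℝ) x) = ξ⁻¹ • (w : ℝ → ℝ) from rfl]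
      exact eLpNorm_const_smul _ _ _ _
    have h3 : eLpNorm (w : ℝ → ℝ) 2 μI ≤ ENNReal.ofReal (Real.sqrt m) := by
      have := MeasureTheory.Lp.norm_def w
      have hne : eLpNorm (w : ℝ → ℝ) 2 μI ≠ ⊤ := MeasureTheory.Lp.eLpNorm_ne_top w
      rw [← ENNReal.ofReal_toReal hne, ← this]
      exact ENNReal.ofReal_le_ofReal hwnorm
    have h4 : (‖ξ⁻¹‖₊ : ℝ≥0∞) = ENNReal.ofReal ξ⁻¹ := by
      rw [← enorm_eq_nnnorm, Real.enorm_eq_ofReal_abs, abs_of_pos (inv_pos.mpr hξ0)]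
    calc eLpNorm (fun x => ξ⁻¹ * (w : ℝ → ℝ) x) 2 μI ^ 2
        ≤ (ENNReal.ofReal ξ⁻¹ * ENNReal.ofReal (Real.sqrt m)) ^ 2 := by
          rw [h2, h4]
          exact pow_le_pow_left' (mul_le_mul_right h3 _) 2
      _ = ENNReal.ofReal (m / ξ ^ 2) := by
          rw [← ENNReal.ofReal_mul (by positivity), ← ENNReal.ofReal_pow (by positivity)]
          congr 1
          rw [mul_pow, Real.sq_sqrt hm]
          field_simp
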